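/- arXiv:2309.05329 — 2 statements merged into one kernel-verified Lean document; each statement's English description precedes it below -/
import Mathlib

section
/- Assume E[|ξₙ|] + E[|ξ'ₙ|] < ∞ and E[ξₙ] = E[ξ'ₙ] = 0. Then the oscillating random walk satisfies the strong law of large numbers: Xₙ/n → 0 almost surely as n → ∞. -/
open MeasureTheory ProbabilityTheory Filter Topology
open scoped ENNReal

/-- The oscillating random walk started at `x`. -/
def oscX {Ω : Type*} (ξ ξ' : ℕ → Ω → ℤ) (B : ℕ → Ω → Bool) (x : ℤ) :
    ℕ → Ω → ℤ
  | 0 => fun _ => x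
  | (n + 1) => fun ω =>
      let p := oscX ξ ξ' B x n ω
      if p ≤ -1 then p + ξ n ω
      else if p = 0 then p + (if B n ω then ξ n ω else ξ' n ω)
      else p + ξ' n ω

namespace OscAux

/-- Running maximum (with `0`) of the first `n` values of `c`. -/
def runMax (c : ℕ → ℝ) : ℕ → ℝ
  | 0 => 0
  | n + 1 => max (runMax c n) (c n)

lemma runMax_nonneg (c : ℕ → ℝ) : ∀ n, 0 ≤ runMax c n
  | 0 => le_refl 0
  | n + 1 => le_trans (runMax_nonneg c n) (le_max_left _ _)

lemma runMax_le (c : ℕ → ℝ) (N : ℕ) (K : ℝ) (hK : 0 ≤ K)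
    (h : ∀ m, N ≤ m → c m ≤ K * m) :
    ∀ n, N ≤ n → runMax c n ≤ max (runMax c N) (K * n) := by
  intro n hn
  induction n with
  | zero =>
    have hN : N = 0 := Nat.le_zero.mp hn
    subst hN; exact le_max_left _ _
  | succ n ih =>
    by_cases hN : N ≤ n
    · have h1 := ih hN
      have h2 : c n ≤ K * n := h n hN
      have hmono : K * (n : ℝ) ≤ K * ((n : ℕ) + 1 : ℕ) := by
        push_cast; nlinarith
      refine max_le (h1.trans (max_le (le_max_left _ _) ?_)) ?_
      · exact le_max_of_le_right hmono
      · exact le_max_of_le_right (h2.trans hmono)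
    · have : N = n + 1 := by omega
      subst this; exact le_max_left _ _

lemma tendsto_runMax (c : ℕ → ℝ)
    (h : Tendsto (fun n : ℕ => c n / n) atTop (𝓝 0)) :
    Tendsto (fun n : ℕ => runMax c n / n) atTop (𝓝 0) := by
  rw [Metric.tendsto_atTop] at h ⊢
  intro ε hε
  obtain ⟨N₀, hN₀⟩ := h (ε / 2) (by linarith)
  set N := max N₀ 1 with hNdef
  have hc : ∀ m, N ≤ m → c m ≤ (ε / 2) * m := by
    intro m hm
    have h1 := hN₀ m (le_trans (le_max_left _ _) hm)
    have hm1 : 1 ≤ m := le_trans (le_max_right _ _) hm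
    rw [Real.dist_eq, sub_zero] at h1
    have hmpos : (0 : ℝ) < m := by exact_mod_cast hm1
    have h2 : c m / m < ε / 2 := (abs_lt.mp h1).2
    calc c m = c m / m * m := by field_simp
      _ ≤ ε / 2 * m := mul_le_mul_of_nonneg_right h2.le hmpos.le
  have h2 : Tendsto (fun n : ℕ => runMax c N / n) atTop (𝓝 0) :=
    tendsto_const_nhds.div_atTop tendsto_natCast_atTop_atTop
  have h3 : ∀ᶠ n : ℕ in atTop, runMax c N / n < ε / 2 :=
    h2.eventually_lt_const (by linarith)
  obtain ⟨N₂, hN₂⟩ :=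
    eventually_atTop.mp ((h3.and (eventually_ge_atTop N)).and (eventually_ge_atTop 1))
  refine ⟨N₂, fun n hn => ?_⟩
  obtain ⟨⟨hlt, hnN⟩, hn1⟩ := hN₂ n hn
  have hb := runMax_le c N (ε / 2) (by linarith) hc n hnN
  have hnpos : (0 : ℝ) < n := by exact_mod_cast hn1
  rw [Real.dist_eq, sub_zero,
    abs_of_nonneg (div_nonneg (runMax_nonneg c n) hnpos.le)]
  have hA : (0 : ℝ) ≤ runMax c N := runMax_nonneg c N
  have hmax : max (runMax c N) (ε / 2 * n) ≤ runMax c N + ε / 2 * n :=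
    max_le (by nlinarith) (by nlinarith)
  calc runMax c n / n ≤ (runMax c N + ε / 2 * n) / n := by
        gcongr
        exact hb.trans hmax
    _ = runMax c N / n + ε / 2 := by
        rw [add_div, mul_div_assoc, div_self hnpos.ne', mul_one]
    _ < ε / 2 + ε / 2 := by linarith
    _ = ε := by ring

lemma tendsto_div_succ (a : ℕ → ℝ)
    (h : Tendsto (fun n : ℕ => a n / n) atTop (𝓝 0)) :
    Tendsto (fun n : ℕ => a (n + 1) / n) atTop (𝓝 0) := by
  have h1 : Tendsto (fun n : ℕ => a (n + 1) / ((n : ℝ) + 1)) atTop (𝓝 0) := by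
    have := h.comp (tendsto_add_atTop_nat 1)
    simpa [Function.comp_def] using this
  have h2 : Tendsto (fun n : ℕ => ((n : ℝ) + 1) / n) atTop (𝓝 1) := by
    have hb : Tendsto (fun n : ℕ => 1 + 1 / (n : ℝ)) atTop (𝓝 1) := by
      simpa using tendsto_const_nhds.add (tendsto_one_div_atTop_nhds_zero_nat (𝕜 := ℝ))
    apply hb.congr'
    filter_upwards [eventually_ge_atTop 1] with n hn
    have hne : (n : ℝ) ≠ 0 := by
      have : (0 : ℝ) < n := by exact_mod_cast hn
      exact this.ne'
    field_simp
  have h3 := h1.mul h2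
  rw [zero_mul] at h3
  apply h3.congr
  intro n
  rcases eq_or_ne (n : ℝ) 0 with hn | hn
  · simp [hn]
  · have hn1 : ((n : ℝ) + 1) ≠ 0 := by positivity
    field_simp

lemma oscX_neg {Ω : Type*} (ξ ξ' : ℕ → Ω → ℤ) (B : ℕ → Ω → Bool) (x : ℤ)
    (ω : Ω) : ∀ n,
    oscX (fun n ω => -(ξ' n ω)) (fun n ω => -(ξ n ω)) (fun n ω => !(B n ω))
      (-x) n ω = -oscX ξ ξ' B x n ω := by
  intro n
  induction n with
  | zero => rfl
  | succ n ih =>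
    cases hB : B n ω <;> simp only [oscX, ih, hB, Bool.not_true, Bool.not_false,
      if_true, if_false, ite_true, ite_false] <;> split_ifs <;>
      first | contradiction | omega

lemma oscX_le {Ω : Type*} (ξ ξ' : ℕ → Ω → ℤ) (B : ℕ → Ω → Bool) (x : ℤ)
    (ω : Ω) : ∀ n,
    (oscX ξ ξ' B x n ω : ℝ)
      ≤ |(x : ℝ)| + runMax (fun m => |(ξ m ω : ℝ)| + |(ξ' m ω : ℝ)|) n
        + (∑ i ∈ Finset.range n, (ξ' i ω : ℝ))
        + runMax (fun m => -∑ i ∈ Finset.range (m + 1), (ξ' i ω : ℝ)) n := by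
  intro n
  induction n with
  | zero => simpa [oscX, runMax] using le_abs_self (x : ℝ)
  | succ n ih =>
    have hMc : runMax (fun m => |(ξ m ω : ℝ)| + |(ξ' m ω : ℝ)|) n
        ≤ runMax (fun m => |(ξ m ω : ℝ)| + |(ξ' m ω : ℝ)|) (n + 1) := le_max_left _ _
    have hcn : |(ξ n ω : ℝ)| + |(ξ' n ω : ℝ)|
        ≤ runMax (fun m => |(ξ m ω : ℝ)| + |(ξ' m ω : ℝ)|) (n + 1) := le_max_right _ _
    have hMT : runMax (fun m => -∑ i ∈ Finset.range (m + 1), (ξ' i ω : ℝ)) n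
        ≤ runMax (fun m => -∑ i ∈ Finset.range (m + 1), (ξ' i ω : ℝ)) (n + 1) :=
      le_max_left _ _
    have hTn : -∑ i ∈ Finset.range (n + 1), (ξ' i ω : ℝ)
        ≤ runMax (fun m => -∑ i ∈ Finset.range (m + 1), (ξ' i ω : ℝ)) (n + 1) :=
      le_max_right _ _
    have habs : (0 : ℝ) ≤ |(x : ℝ)| := abs_nonneg _
    have hsum : (∑ i ∈ Finset.range (n + 1), (ξ' i ω : ℝ))
        = (∑ i ∈ Finset.range n, (ξ' i ω : ℝ)) + (ξ' n ω : ℝ) :=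
      Finset.sum_range_succ _ _
    have haξ : (ξ n ω : ℝ) ≤ |(ξ n ω : ℝ)| := le_abs_self _
    have haξ' : (ξ' n ω : ℝ) ≤ |(ξ' n ω : ℝ)| := le_abs_self _
    have hξnn : (0 : ℝ) ≤ |(ξ n ω : ℝ)| := abs_nonneg _
    have hξnn' : (0 : ℝ) ≤ |(ξ' n ω : ℝ)| := abs_nonneg _
    simp only [oscX]
    split_ifs with h1 h2 h3
    · -- p ≤ -1, increment ξ n
      have hp : (oscX ξ ξ' B x n ω : ℝ) ≤ -1 := by exact_mod_cast h1
      push_cast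
      linarith
    · -- p = 0, B true, increment ξ n
      have hp : (oscX ξ ξ' B x n ω : ℝ) = 0 := by exact_mod_cast h2
      push_cast
      linarith
    · -- p = 0, B false, increment ξ' n
      have hp : (oscX ξ ξ' B x n ω : ℝ) = 0 := by exact_mod_cast h2
      push_cast
      linarith
    · -- p ≥ 1, increment ξ' n
      push_cast
      linarith

lemma ub_tendsto (a b : ℕ → ℝ) (r : ℝ)
    (ha : Tendsto (fun n : ℕ => (∑ i ∈ Finset.range n, a i) / n) atTop (𝓝 0))
    (hb : Tendsto (fun n : ℕ => (∑ i ∈ Finset.range n, b i) / n) atTop (𝓝 0)) :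
    Tendsto (fun n : ℕ =>
      (r + runMax (fun m => |a m| + |b m|) n + (∑ i ∈ Finset.range n, b i)
        + runMax (fun m => -∑ i ∈ Finset.range (m + 1), b i) n) / n)
      atTop (𝓝 0) := by
  have hsingle : ∀ u : ℕ → ℝ,
      Tendsto (fun n : ℕ => (∑ i ∈ Finset.range n, u i) / n) atTop (𝓝 0) →
      Tendsto (fun n : ℕ => u n / n) atTop (𝓝 0) := by
    intro u hu
    have h1 := tendsto_div_succ _ hu
    have h2 := h1.sub hu
    rw [sub_zero] at h2
    apply h2.congr
    intro n
    rw [Finset.sum_range_succ]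
    ring
  have ha' := hsingle a ha
  have hb' := hsingle b hb
  have hc : Tendsto (fun n : ℕ => (|a n| + |b n|) / n) atTop (𝓝 0) := by
    have h3 : Tendsto (fun n : ℕ => |a n / n| + |b n / n|) atTop (𝓝 0) := by
      simpa using ha'.abs.add hb'.abs
    apply h3.congr
    intro n
    rw [add_div, abs_div, abs_div, Nat.abs_cast]
  have hT : Tendsto (fun n : ℕ =>
      (-∑ i ∈ Finset.range (n + 1), b i) / n) atTop (𝓝 0) := by
    simpa [neg_div] using (tendsto_div_succ _ hb).neg
  have h1 : Tendsto (fun n : ℕ => r / n) atTop (𝓝 0) :=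
    tendsto_const_nhds.div_atTop tendsto_natCast_atTop_atTop
  have h2 := tendsto_runMax _ hc
  have h4 := tendsto_runMax _ hT
  have h5 := ((h1.add h2).add hb).add h4
  simp only [add_zero] at h5
  apply h5.congr
  intro n
  rw [add_div, add_div, add_div]

lemma det {Ω : Type*} (ξ ξ' : ℕ → Ω → ℤ) (B : ℕ → Ω → Bool) (x : ℤ) (ω : Ω)
    (hS : Tendsto (fun n : ℕ => (∑ i ∈ Finset.range n, (ξ i ω : ℝ)) / n)
      atTop (𝓝 0))
    (hS' : Tendsto (fun n : ℕ => (∑ i ∈ Finset.range n, (ξ' i ω : ℝ)) / n)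
      atTop (𝓝 0)) :
    Tendsto (fun n : ℕ => (oscX ξ ξ' B x n ω : ℝ) / n) atTop (𝓝 0) := by
  have hup := oscX_le ξ ξ' B x ω
  have hlow0 := oscX_le (fun n ω => -(ξ' n ω)) (fun n ω => -(ξ n ω))
    (fun n ω => !(B n ω)) (-x) ω
  have hlow : ∀ n, -(oscX ξ ξ' B x n ω : ℝ)
      ≤ |(-(x : ℝ))| + runMax (fun m => |(-(ξ' m ω : ℝ))| + |(-(ξ m ω : ℝ))|) n
        + (∑ i ∈ Finset.range n, -(ξ i ω : ℝ))
        + runMax (fun m => -∑ i ∈ Finset.range (m + 1), -(ξ i ω : ℝ)) n := by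
    intro n
    have := hlow0 n
    rw [oscX_neg ξ ξ' B x ω n] at this
    push_cast at this
    exact this
  have hSneg : Tendsto (fun n : ℕ =>
      (∑ i ∈ Finset.range n, -(ξ i ω : ℝ)) / n) atTop (𝓝 0) := by
    simpa [Finset.sum_neg_distrib, neg_div] using hS.neg
  have hS'neg : Tendsto (fun n : ℕ =>
      (∑ i ∈ Finset.range n, -(ξ' i ω : ℝ)) / n) atTop (𝓝 0) := by
    simpa [Finset.sum_neg_distrib, neg_div] using hS'.neg
  have hU := ub_tendsto (fun m => (ξ m ω : ℝ)) (fun m => (ξ' m ω : ℝ)) |(x : ℝ)| hS hS'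
  have hL := ub_tendsto (fun m => -(ξ' m ω : ℝ)) (fun m => -(ξ m ω : ℝ))
    |(-(x : ℝ))| hS'neg hSneg
  have hLneg : Tendsto (fun n : ℕ =>
      -((|(-(x : ℝ))| + runMax (fun m => |(-(ξ' m ω : ℝ))| + |(-(ξ m ω : ℝ))|) n
        + (∑ i ∈ Finset.range n, -(ξ i ω : ℝ))
        + runMax (fun m => -∑ i ∈ Finset.range (m + 1), -(ξ i ω : ℝ)) n) / n))
      atTop (𝓝 0) := by simpa using hL.neg
  refine tendsto_of_tendsto_of_tendsto_of_le_of_le' hLneg hU ?_ ?_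
  · filter_upwards [eventually_ge_atTop 1] with n hn
    have hnpos : (0 : ℝ) < n := by exact_mod_cast hn
    have h2 := neg_le.mp (hlow n)
    rw [neg_div' ]
    exact div_le_div_of_nonneg_right h2 hnpos.le
  · filter_upwards [eventually_ge_atTop 1] with n hn
    have hnpos : (0 : ℝ) < n := by exact_mod_cast hn
    exact div_le_div_of_nonneg_right (hup n) hnpos.le

end OscAux

/-- If the increments are integrable and centered, the oscillating random
walk satisfies the strong law of large numbers: `Xₙ/n → 0` almost surely. -/
theorem oscillating_slln
    {Ω : Type*} [MeasurableSpace Ω] (P : Measure Ω) [IsProbabilityMeasure P]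
    (ξ ξ' : ℕ → Ω → ℤ) (B : ℕ → Ω → Bool) (μ μ' : Measure ℤ) (α : ℝ) (x : ℤ)
    [IsProbabilityMeasure μ] [IsProbabilityMeasure μ']
    (hα : α ∈ Set.Icc (0 : ℝ) 1)
    (hmeas : ∀ n, Measurable (ξ n)) (hmeas' : ∀ n, Measurable (ξ' n))
    (hmeasB : ∀ n, Measurable (B n))
    (hindep : iIndepFun
      (fun n ω => (ξ n ω, ξ' n ω, B n ω)) P)
    (hBindep : ∀ n, IndepFun (B n) (fun ω => (ξ n ω, ξ' n ω)) P)
    (hdist : ∀ n, P.map (ξ n) = μ) (hdist' : ∀ n, P.map (ξ' n) = μ')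
    (hBdist : ∀ n, P {ω | B n ω = true} = ENNReal.ofReal α)
    -- E[|ξ|] + E[|ξ'|] < ∞
    (hint : Integrable (fun z : ℤ => (z : ℝ)) μ)
    (hint' : Integrable (fun z : ℤ => (z : ℝ)) μ')
    -- E[ξ] = E[ξ'] = 0
    (hcent : ∫ z, (z : ℝ) ∂μ = 0) (hcent' : ∫ z, (z : ℝ) ∂μ' = 0) :
    ∀ᵐ ω ∂P, Tendsto (fun n : ℕ => (oscX ξ ξ' B x n ω : ℝ) / n) atTop (𝓝 0) := by
  classical
  have hcast : Measurable (fun z : ℤ => (z : ℝ)) := Measurable.of_discrete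
  -- SLLN for ξ
  have hξindep : Pairwise (Function.onFun (IndepFun · · P) fun n ω => (ξ n ω : ℝ)) := by
    have h1 : iIndepFun (fun n ω => (ξ n ω : ℝ)) P :=
      hindep.comp (fun _ (p : ℤ × ℤ × Bool) => (p.1 : ℝ))
        (fun _ => hcast.comp measurable_fst)
    exact fun i j hij => h1.indepFun hij
  have hξ'indep : Pairwise (Function.onFun (IndepFun · · P) fun n ω => (ξ' n ω : ℝ)) := by
    have h1 : iIndepFun (fun n ω => (ξ' n ω : ℝ)) P :=
      hindep.comp (fun _ (p : ℤ × ℤ × Bool) => (p.2.1 : ℝ))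
        (fun _ => hcast.comp (measurable_fst.comp measurable_snd))
    exact fun i j hij => h1.indepFun hij
  have hident : ∀ i, IdentDistrib (fun ω => (ξ i ω : ℝ)) (fun ω => (ξ 0 ω : ℝ)) P P := by
    intro i
    have h0 : IdentDistrib (ξ i) (ξ 0) P P :=
      ⟨(hmeas i).aemeasurable, (hmeas 0).aemeasurable, by rw [hdist i, hdist 0]⟩
    exact h0.comp hcast
  have hident' : ∀ i, IdentDistrib (fun ω => (ξ' i ω : ℝ)) (fun ω => (ξ' 0 ω : ℝ)) P P := by
    intro i
    have h0 : IdentDistrib (ξ' i) (ξ' 0) P P :=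
      ⟨(hmeas' i).aemeasurable, (hmeas' 0).aemeasurable, by rw [hdist' i, hdist' 0]⟩
    exact h0.comp hcast
  have hintξ : Integrable (fun ω => (ξ 0 ω : ℝ)) P := by
    have h1 : AEStronglyMeasurable (fun z : ℤ => (z : ℝ)) (P.map (ξ 0)) :=
      hcast.aestronglyMeasurable
    exact (integrable_map_measure h1 (hmeas 0).aemeasurable).mp
      (by rw [hdist 0]; exact hint)
  have hintξ' : Integrable (fun ω => (ξ' 0 ω : ℝ)) P := by
    have h1 : AEStronglyMeasurable (fun z : ℤ => (z : ℝ)) (P.map (ξ' 0)) :=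
      hcast.aestronglyMeasurable
    exact (integrable_map_measure h1 (hmeas' 0).aemeasurable).mp
      (by rw [hdist' 0]; exact hint')
  have hmean : ∫ ω, (ξ 0 ω : ℝ) ∂P = 0 := by
    rw [← integral_map (hmeas 0).aemeasurable hcast.aestronglyMeasurable,
      hdist 0, hcent]
  have hmean' : ∫ ω, (ξ' 0 ω : ℝ) ∂P = 0 := by
    rw [← integral_map (hmeas' 0).aemeasurable hcast.aestronglyMeasurable,
      hdist' 0, hcent']
  have hSLLN := strong_law_ae_real (fun n ω => (ξ n ω : ℝ)) hintξ hξindep hident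
  have hSLLN' := strong_law_ae_real (fun n ω => (ξ' n ω : ℝ)) hintξ' hξ'indep hident'
  rw [hmean] at hSLLN
  rw [hmean'] at hSLLN'
  filter_upwards [hSLLN, hSLLN'] with ω hSω hS'ω
  exact OscAux.det ξ ξ' B x ω hSω hS'ω
end

section
/- The skew Brownian heat kernel satisfies the Chapman–Kolmogorov equation: for all γ ∈ [0,1], s, t > 0 and x, z ∈ ℝ, ∫_ℝ p^γ_s(x,y) p^γ_t(y,z) dy = p^γ_{s+t}(x,z), where p^γ_t(x,y) = p_t(x,y) + (2γ-1) sign(y) p_t(0, |x|+|y|) and p_t is the Gaussian kernel (2πt)^{-1/2} e^{-(x-y)²/(2t)}. -/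
open MeasureTheory Real

/-- The Gaussian heat kernel on ℝ. -/
noncomputable def heatKernel (t x y : ℝ) : ℝ :=
  (1 / Real.sqrt (2 * π * t)) * Real.exp (-(x - y) ^ 2 / (2 * t))

/-- The skew Brownian heat kernel with parameter `γ`. -/
noncomputable def skewHeatKernel (γ t x y : ℝ) : ℝ :=
  heatKernel t x y + (2 * γ - 1) * Real.sign y * heatKernel t 0 (|x| + |y|)

/-! ### Auxiliary lemmas -/

lemma heatKernel_congr (t : ℝ) {x y x' y' : ℝ} (h : (x - y)^2 = (x' - y')^2) :
    heatKernel t x y = heatKernel t x' y' := by unfold heatKernel; rw [h]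

lemma heatKernel_nonneg (t x y : ℝ) : 0 ≤ heatKernel t x y := by
  unfold heatKernel; positivity

lemma heatKernel_le {t : ℝ} (ht : 0 < t) (x y : ℝ) :
    heatKernel t x y ≤ 1 / Real.sqrt (2 * π * t) := by
  unfold heatKernel
  have h1 : Real.exp (-(x - y) ^ 2 / (2 * t)) ≤ 1 := by
    rw [Real.exp_le_one_iff]
    exact div_nonpos_of_nonpos_of_nonneg (neg_nonpos.2 (sq_nonneg _)) (by positivity)
  calc (1 / Real.sqrt (2 * π * t)) * Real.exp (-(x - y) ^ 2 / (2 * t))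
      ≤ (1 / Real.sqrt (2 * π * t)) * 1 := by
        apply mul_le_mul_of_nonneg_left h1 (by positivity)
    _ = 1 / Real.sqrt (2 * π * t) := mul_one _

lemma heatKernel_zero_anti {t : ℝ} (ht : 0 < t) {y w : ℝ} (h : y^2 ≤ w^2) :
    heatKernel t 0 w ≤ heatKernel t 0 y := by
  unfold heatKernel
  apply mul_le_mul_of_nonneg_left _ (by positivity)
  apply Real.exp_le_exp.2
  have h2 : (0 - w)^2 = w^2 := by ring
  have h3 : (0 - y)^2 = y^2 := by ring
  rw [h2, h3, neg_div, neg_div, neg_le_neg_iff]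
  exact div_le_div_of_nonneg_right h (by positivity)

lemma continuous_heatKernel_right (t a : ℝ) : Continuous (fun y => heatKernel t a y) := by
  unfold heatKernel
  exact continuous_const.mul (Real.continuous_exp.comp
    ((((continuous_const.sub continuous_id).pow 2).neg).div_const (2*t)))

lemma continuous_heatKernel_left (t a : ℝ) : Continuous (fun y => heatKernel t y a) := by
  unfold heatKernel
  exact continuous_const.mul (Real.continuous_exp.comp
    ((((continuous_id.sub continuous_const).pow 2).neg).div_const (2*t)))

lemma integrable_heatKernel {t : ℝ} (ht : 0 < t) (x : ℝ) :
    Integrable (fun y => heatKernel t x y) := by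
  have h : Integrable (fun y : ℝ => Real.exp (-(1/(2*t)) * y^2)) :=
    integrable_exp_neg_mul_sq (by positivity)
  have h2 := (h.comp_sub_right x).const_mul (1 / Real.sqrt (2 * π * t))
  refine h2.congr (Filter.Eventually.of_forall fun y => ?_)
  have hx : -(1/(2*t)) * (y - x)^2 = -(x - y)^2/(2*t) := by ring
  simp only [heatKernel]
  rw [hx]

/-- Chapman–Kolmogorov for the Gaussian heat kernel. -/
lemma heatKernel_chapman {s t : ℝ} (hs : 0 < s) (ht : 0 < t) (u v : ℝ) :
    ∫ y : ℝ, heatKernel s u y * heatKernel t y v = heatKernel (s + t) u v := by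
  have hst : 0 < s + t := by linarith
  set b : ℝ := (s + t) / (2 * s * t) with hb
  have hbpos : 0 < b := by positivity
  set m : ℝ := (t * u + s * v) / (s + t) with hm
  have key : ∀ y : ℝ, heatKernel s u y * heatKernel t y v
      = ((1 / Real.sqrt (2 * π * s)) * (1 / Real.sqrt (2 * π * t))
          * Real.exp (-(u - v) ^ 2 / (2 * (s + t)))) * Real.exp (-b * (y - m) ^ 2) := by
    intro y
    simp only [heatKernel]
    rw [mul_mul_mul_comm, ← Real.exp_add,
      mul_assoc ((1 / Real.sqrt (2 * π * s)) * (1 / Real.sqrt (2 * π * t))), ← Real.exp_add]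
    congr 1
    rw [Real.exp_eq_exp]
    rw [hb, hm]
    have h1 : s ≠ 0 := hs.ne'
    have h2 : t ≠ 0 := ht.ne'
    have h3 : s + t ≠ 0 := hst.ne'
    field_simp
    ring
  rw [integral_congr_ae (Filter.Eventually.of_forall key), integral_const_mul]
  have h1 : ∫ y : ℝ, Real.exp (-b * (y - m) ^ 2) = Real.sqrt (π / b) := by
    rw [integral_sub_right_eq_self (fun y => Real.exp (-b * y ^ 2)) m]
    exact integral_gaussian b
  rw [h1]
  have h2 : π / b = (2 * π * s) * ((2 * π * t) / (2 * π * (s + t))) := by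
    rw [hb]; field_simp
  have h3 : Real.sqrt (π / b)
      = Real.sqrt (2 * π * s) * Real.sqrt (2 * π * t) / Real.sqrt (2 * π * (s + t)) := by
    rw [h2, Real.sqrt_mul (by positivity), Real.sqrt_div (by positivity), mul_div_assoc]
  rw [h3]
  have e1 : Real.sqrt (2 * π * s) ≠ 0 := by positivity
  have e2 : Real.sqrt (2 * π * t) ≠ 0 := by positivity
  have e3 : Real.sqrt (2 * π * (s + t)) ≠ 0 := by positivity
  unfold heatKernel
  field_simp

lemma measurable_realSign : Measurable Real.sign := by
  have h : Real.sign = fun r : ℝ => if r < 0 then (-1:ℝ) else if 0 < r then 1 else 0 := by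
    funext r; rfl
  rw [h]
  exact Measurable.ite (measurableSet_lt measurable_id measurable_const) measurable_const
    (Measurable.ite (measurableSet_lt measurable_const measurable_id)
      measurable_const measurable_const)

lemma abs_realSign_le (z : ℝ) : |Real.sign z| ≤ 1 := by
  rcases lt_trichotomy z 0 with h | h | h
  · rw [Real.sign_of_neg h]; norm_num
  · rw [h, Real.sign_zero]; norm_num
  · rw [Real.sign_of_pos h]; norm_num

lemma heat_abs_left (s x y : ℝ) :
    heatKernel s x y + heatKernel s x (-y) = heatKernel s |x| y + heatKernel s |x| (-y) := by
  rcases le_or_gt 0 x with h | h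
  · rw [abs_of_nonneg h]
  · rw [abs_of_neg h,
      show heatKernel s x y = heatKernel s (-x) (-y) from heatKernel_congr s (by ring),
      show heatKernel s x (-y) = heatKernel s (-x) y from heatKernel_congr s (by ring),
      add_comm]

lemma heat_sign_right (t y z : ℝ) :
    heatKernel t y z - heatKernel t y (-z)
      = Real.sign z * (heatKernel t y |z| - heatKernel t y (-|z|)) := by
  rcases lt_trichotomy z 0 with h | h | h
  · rw [Real.sign_of_neg h, abs_of_neg h, neg_neg]; ring
  · rw [h, Real.sign_zero, neg_zero]; ring
  · rw [Real.sign_of_pos h, abs_of_pos h]; ring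

/-- The key pointwise identity. -/
lemma skew_key (γ s t x z : ℝ) {y : ℝ} (hy : y ≠ 0) :
    skewHeatKernel γ s x y * skewHeatKernel γ t y z
      + skewHeatKernel γ s x (-y) * skewHeatKernel γ t (-y) z
    = (heatKernel s x y * heatKernel t y z + heatKernel s x (-y) * heatKernel t (-y) z)
      + (2*γ - 1) * Real.sign z *
        (heatKernel s |x| y * heatKernel t y (-|z|)
          + heatKernel s |x| (-y) * heatKernel t (-y) (-|z|)) := by
  wlog hy' : 0 < y generalizing y
  · have hneg : (0:ℝ) < -y := by
      rcases hy.lt_or_gt with h | h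
      · linarith
      · exact absurd h hy'
    have h2 := this (neg_ne_zero.2 hy) hneg
    rw [neg_neg] at h2
    linarith [h2]
  have hsy : Real.sign y = 1 := Real.sign_of_pos hy'
  have hsny : Real.sign (-y) = -1 := Real.sign_of_neg (by linarith)
  have hay : |y| = y := abs_of_pos hy'
  have hany : |(-y)| = y := by rw [abs_neg, hay]
  simp only [skewHeatKernel, hsy, hsny, hay, hany]
  rw [show heatKernel s 0 (|x| + y) = heatKernel s |x| (-y) from heatKernel_congr s (by ring),
      show heatKernel t 0 (y + |z|) = heatKernel t y (-|z|) from heatKernel_congr t (by ring),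
      show heatKernel t (-y) z = heatKernel t y (-z) from heatKernel_congr t (by ring),
      show heatKernel t (-y) (-|z|) = heatKernel t y |z| from heatKernel_congr t (by ring)]
  have E2 := heat_abs_left s x y
  have E3 := heat_sign_right t y z
  linear_combination ((2*γ-1) * Real.sign z * heatKernel t y (-|z|)) * E2
    + ((2*γ-1) * heatKernel s |x| (-y)) * E3

lemma integrable_skew {γ s : ℝ} (hβ : |2*γ-1| ≤ 1) (hs : 0 < s) (x : ℝ) :
    Integrable (fun y => skewHeatKernel γ s x y) := by
  simp only [skewHeatKernel]
  apply (integrable_heatKernel hs x).add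
  have hmeas : AEStronglyMeasurable
      (fun y : ℝ => (2*γ-1) * Real.sign y * heatKernel s 0 (|x| + |y|)) volume := by
    apply Measurable.aestronglyMeasurable
    exact (measurable_const.mul measurable_realSign).mul
      (((continuous_heatKernel_right s 0).comp (continuous_const.add continuous_abs)).measurable)
  apply Integrable.mono' (integrable_heatKernel hs 0) hmeas
  filter_upwards with y
  rw [Real.norm_eq_abs, abs_mul, abs_mul, abs_of_nonneg (heatKernel_nonneg _ _ _)]
  have h2 : y^2 ≤ (|x| + |y|)^2 := by
    nlinarith [sq_abs y, abs_nonneg x, abs_nonneg y]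
  have k1 : |2*γ-1| * |Real.sign y| ≤ 1 :=
    mul_le_one₀ hβ (abs_nonneg _) (abs_realSign_le y)
  calc |2*γ-1| * |Real.sign y| * heatKernel s 0 (|x| + |y|)
      ≤ 1 * heatKernel s 0 (|x| + |y|) :=
        mul_le_mul_of_nonneg_right k1 (heatKernel_nonneg _ _ _)
    _ = heatKernel s 0 (|x| + |y|) := one_mul _
    _ ≤ heatKernel s 0 y := heatKernel_zero_anti hs h2

lemma continuous_skew_left (γ t z : ℝ) : Continuous (fun y => skewHeatKernel γ t y z) := by
  simp only [skewHeatKernel]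
  exact (continuous_heatKernel_left t z).add
    (continuous_const.mul ((continuous_heatKernel_right t 0).comp
      (continuous_abs.add continuous_const)))

lemma skew_bdd {γ t : ℝ} (hβ : |2*γ-1| ≤ 1) (ht : 0 < t) (z y : ℝ) :
    ‖skewHeatKernel γ t y z‖ ≤ 2 / Real.sqrt (2 * π * t) := by
  rw [Real.norm_eq_abs, skewHeatKernel]
  have h1 : |heatKernel t y z| ≤ 1 / Real.sqrt (2 * π * t) := by
    rw [abs_of_nonneg (heatKernel_nonneg _ _ _)]; exact heatKernel_le ht y z
  have h2 : |(2*γ-1) * Real.sign z * heatKernel t 0 (|y| + |z|)| ≤ 1 / Real.sqrt (2 * π * t) := by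
    rw [abs_mul, abs_mul, abs_of_nonneg (heatKernel_nonneg _ _ _)]
    calc |2*γ-1| * |Real.sign z| * heatKernel t 0 (|y| + |z|)
        ≤ 1 * heatKernel t 0 (|y| + |z|) :=
          mul_le_mul_of_nonneg_right (mul_le_one₀ hβ (abs_nonneg _) (abs_realSign_le z))
            (heatKernel_nonneg _ _ _)
      _ = heatKernel t 0 (|y| + |z|) := one_mul _
      _ ≤ 1 / Real.sqrt (2 * π * t) := heatKernel_le ht 0 _
  calc |heatKernel t y z + (2*γ-1) * Real.sign z * heatKernel t 0 (|y| + |z|)|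
      ≤ |heatKernel t y z| + |(2*γ-1) * Real.sign z * heatKernel t 0 (|y| + |z|)| := abs_add_le _ _
    _ ≤ 1 / Real.sqrt (2 * π * t) + 1 / Real.sqrt (2 * π * t) := add_le_add h1 h2
    _ = 2 / Real.sqrt (2 * π * t) := by ring

lemma integrable_skew_prod {γ s t : ℝ} (hβ : |2*γ-1| ≤ 1) (hs : 0 < s) (ht : 0 < t) (x z : ℝ) :
    Integrable (fun y => skewHeatKernel γ s x y * skewHeatKernel γ t y z) := by
  have hb := Integrable.bdd_mul (integrable_skew hβ hs x)
    (continuous_skew_left γ t z).aestronglyMeasurable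
    (c := 2 / Real.sqrt (2 * π * t)) (Filter.Eventually.of_forall fun y => skew_bdd hβ ht z y)
  refine hb.congr (Filter.Eventually.of_forall fun y => ?_)
  simp only [Pi.mul_apply]
  ring

lemma skew_half (t x y : ℝ) : skewHeatKernel (1/2) t x y = heatKernel t x y := by
  simp [skewHeatKernel]

/-- Chapman–Kolmogorov equation for the skew Brownian heat kernel:
`∫ p^γ_s(x,y) p^γ_t(y,z) dy = p^γ_{s+t}(x,z)`. -/
theorem skew_heat_kernel_chapman_kolmogorov
    (γ s t : ℝ) (hγ : γ ∈ Set.Icc (0 : ℝ) 1) (hs : 0 < s) (ht : 0 < t)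
    (x z : ℝ) :
    ∫ y : ℝ, skewHeatKernel γ s x y * skewHeatKernel γ t y z
      = skewHeatKernel γ (s + t) x z := by
  obtain ⟨hγ0, hγ1⟩ := hγ
  have hβ : |2*γ-1| ≤ 1 := by rw [abs_le]; constructor <;> linarith
  have hβ2 : |2*(1/2:ℝ)-1| ≤ 1 := by norm_num
  set F : ℝ → ℝ := fun y => skewHeatKernel γ s x y * skewHeatKernel γ t y z with hF
  set G : ℝ → ℝ := fun y => heatKernel s x y * heatKernel t y z with hG
  set H : ℝ → ℝ := fun y => heatKernel s |x| y * heatKernel t y (-|z|) with hH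
  have hFi : Integrable F := integrable_skew_prod hβ hs ht x z
  have hGi : Integrable G := by
    refine (integrable_skew_prod hβ2 hs ht x z).congr
      (Filter.Eventually.of_forall fun y => ?_)
    simp only [skew_half]
    rfl
  have hHi : Integrable H := by
    refine (integrable_skew_prod hβ2 hs ht |x| (-|z|)).congr
      (Filter.Eventually.of_forall fun y => ?_)
    simp only [skew_half]
    rfl
  have h0 : ∀ᵐ (y : ℝ), y ≠ 0 := by
    rw [MeasureTheory.ae_iff]
    have : {y : ℝ | ¬ y ≠ 0} = {0} := by ext w; simp
    rw [this]
    exact Real.volume_singleton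
  have hae : (fun y => F y + F (-y)) =ᵐ[volume]
      (fun y => (G y + G (-y)) + (2*γ-1) * Real.sign z * (H y + H (-y))) := by
    filter_upwards [h0] with y hy
    exact skew_key γ s t x z hy
  have hFn : Integrable (fun y : ℝ => F (-y)) := hFi.comp_neg
  have hGn : Integrable (fun y : ℝ => G (-y)) := hGi.comp_neg
  have hHn : Integrable (fun y : ℝ => H (-y)) := hHi.comp_neg
  have hGG : Integrable (fun y : ℝ => G y + G (-y)) := hGi.add hGn
  have hHH : Integrable (fun y : ℝ => H y + H (-y)) := hHi.add hHn
  have hHHc : Integrable (fun y : ℝ => (2*γ-1) * Real.sign z * (H y + H (-y))) :=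
    hHH.const_mul _
  have l1 : ∫ y, (F y + F (-y)) = 2 * ∫ y, F y := by
    rw [integral_add hFi hFn, integral_neg_eq_self F]; ring
  have l2 : ∫ y, ((G y + G (-y)) + (2*γ-1) * Real.sign z * (H y + H (-y)))
      = 2 * (∫ y, G y) + (2*γ-1) * Real.sign z * (2 * ∫ y, H y) := by
    rw [integral_add hGG hHHc, integral_add hGi hGn, integral_const_mul,
        integral_add hHi hHn, integral_neg_eq_self G, integral_neg_eq_self H]
    ring
  have h2I : 2 * ∫ y, F y = 2 * (∫ y, G y) + (2*γ-1) * Real.sign z * (2 * ∫ y, H y) := by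
    rw [← l1, integral_congr_ae hae, l2]
  have cG : ∫ y, G y = heatKernel (s+t) x z := heatKernel_chapman hs ht x z
  have cH : ∫ y, H y = heatKernel (s+t) |x| (-|z|) := heatKernel_chapman hs ht |x| (-|z|)
  have hIF : ∫ y, F y = heatKernel (s+t) x z + (2*γ-1) * Real.sign z * heatKernel (s+t) |x| (-|z|) := by
    rw [cG, cH] at h2I
    linarith
  rw [hIF,
    show heatKernel (s+t) |x| (-|z|) = heatKernel (s+t) 0 (|x|+|z|) from heatKernel_congr _ (by ring)]
  simp only [skewHeatKernel]
end
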